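/- Let p ≥ 3 be a prime. Then for all integers n ≥ 0, α ≥ 0, δ ≥ 0, and every t ∈ {1, 2, …, p−1}, the number of overpartition quadruples with odd parts satisfies OPT_4(8·3^{2α}·p^{2δ+1}(pn+t) + 2·3^{2α}·p^{2(δ+1)} + 3^{2α} − 1) ≡ 0 (mod 16). -/

import Mathlib

/-- An overpartition with odd parts, encoded as a pair of multisets of odd
(hence positive) integers: the overlined parts (which are distinct, since the
last occurrence of each part size may be overlined) and the non-overlined
parts. -/
def IsOddOverpartition (p : Multiset ℕ × Multiset ℕ) : Prop :=
  p.1.Nodup ∧ (∀ x ∈ p.1, Odd x) ∧ (∀ x ∈ p.2, Odd x)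

/-- `OPT k n` is the number of overpartition `k`-tuples of `n` with odd parts,
with generating function `∏_{i≥1} ((1+q^{2i-1})/(1-q^{2i-1}))^k`. -/
noncomputable def OPT (k n : ℕ) : ℕ :=
  Set.ncard {f : Fin k → Multiset ℕ × Multiset ℕ |
    (∀ i, IsOddOverpartition (f i)) ∧ (∑ i, ((f i).1.sum + (f i).2.sum)) = n}

open Finset

namespace OPTAux

abbrev T : Type := Multiset ℕ × Multiset ℕ

def comb (p : T) : Multiset ℕ := p.1 + p.2

/-- The set of overpartitions of `m` with odd parts. -/
def Pset (m : ℕ) : Set T := {p | IsOddOverpartition p ∧ p.1.sum + p.2.sum = m}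

lemma mem_Pset {m : ℕ} {p : T} :
    p ∈ Pset m ↔ p.1.Nodup ∧ (∀ x ∈ comb p, Odd x) ∧ (comb p).sum = m := by
  unfold Pset IsOddOverpartition comb
  simp only [Set.mem_setOf_eq, Multiset.mem_add, Multiset.sum_add]
  constructor
  · rintro ⟨⟨h1, h2, h3⟩, h4⟩
    exact ⟨h1, by rintro x (hx | hx); exacts [h2 x hx, h3 x hx], h4⟩
  · rintro ⟨h1, h2, h3⟩
    exact ⟨⟨h1, fun x hx => h2 x (Or.inl hx), fun x hx => h2 x (Or.inr hx)⟩, h3⟩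

lemma card_le_sum {s : Multiset ℕ} (h : ∀ x ∈ s, Odd x) : Multiset.card s ≤ s.sum := by
  simpa using Multiset.card_nsmul_le_sum (a := 1) (fun x hx => (h x hx).pos)

lemma mem_le_sum {s : Multiset ℕ} {x : ℕ} (hx : x ∈ s) : x ≤ s.sum :=
  Multiset.single_le_sum (fun _ _ => Nat.zero_le _) _ hx

/-- `Pset m` is finite. -/
lemma Pset_finite (m : ℕ) : (Pset m).Finite := by
  classical
  set B : Multiset ℕ := m • Multiset.range (m + 1) with hB
  have hsub : Pset m ⊆ {p : T | p.1 ∈ B.powerset ∧ p.2 ∈ B.powerset} := by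
    rintro p hp
    rw [mem_Pset] at hp
    obtain ⟨-, hodd, hsum⟩ := hp
    have hboth : ∀ q : Multiset ℕ, q ≤ comb p → q ∈ B.powerset := by
      intro q hq
      rw [Multiset.mem_powerset]
      refine le_trans hq ?_
      rw [Multiset.le_iff_count]
      intro a
      by_cases ha : a ∈ comb p
      · have ha1 : a < m + 1 := Nat.lt_succ_of_le (hsum ▸ mem_le_sum ha)
        have hcnt : Multiset.count a (comb p) ≤ m := by
          calc Multiset.count a (comb p) ≤ Multiset.card (comb p) :=
                Multiset.count_le_card _ _
            _ ≤ (comb p).sum := card_le_sum hodd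
            _ = m := hsum
        have : Multiset.count a B = m * Multiset.count a (Multiset.range (m + 1)) := by
          rw [hB, Multiset.count_nsmul]
        have hr : Multiset.count a (Multiset.range (m + 1)) = 1 :=
          Multiset.count_eq_one_of_mem (Multiset.nodup_range _) (Multiset.mem_range.2 ha1)
        rw [this, hr, mul_one]
        exact hcnt
      · rw [Multiset.count_eq_zero_of_notMem ha]
        exact Nat.zero_le _
    exact ⟨hboth p.1 (Multiset.le_add_right _ _), hboth p.2 (Multiset.le_add_left _ _)⟩
  refine Set.Finite.subset ?_ hsub
  have : {p : T | p.1 ∈ B.powerset ∧ p.2 ∈ B.powerset}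
      = {x | x ∈ B.powerset} ×ˢ {x | x ∈ B.powerset} := rfl
  rw [this]
  exact Set.Finite.prod (Multiset.finite_toSet _) (Multiset.finite_toSet _)


noncomputable section

/-- The largest part of an overpartition. -/
def mx (p : T) : ℕ :=
  if h : (comb p).toFinset.Nonempty then (comb p).toFinset.max' h else 0

/-- The smallest part of an overpartition. -/
def mn (p : T) : ℕ :=
  if h : (comb p).toFinset.Nonempty then (comb p).toFinset.min' h else 0

lemma toFinset_ne {p : T} (h : comb p ≠ 0) : (comb p).toFinset.Nonempty := by
  classical
  rw [Multiset.toFinset_nonempty]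
  exact h

lemma mx_mem {p : T} (h : comb p ≠ 0) : mx p ∈ comb p := by
  classical
  rw [mx, dif_pos (toFinset_ne h)]
  exact Multiset.mem_toFinset.1 ((comb p).toFinset.max'_mem _)

lemma mn_mem {p : T} (h : comb p ≠ 0) : mn p ∈ comb p := by
  classical
  rw [mn, dif_pos (toFinset_ne h)]
  exact Multiset.mem_toFinset.1 ((comb p).toFinset.min'_mem _)

lemma le_mx {p : T} {x : ℕ} (hx : x ∈ comb p) : x ≤ mx p := by
  classical
  have h : comb p ≠ 0 := fun h0 => by simp [h0] at hx
  rw [mx, dif_pos (toFinset_ne h)]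
  exact Finset.le_max' _ _ (Multiset.mem_toFinset.2 hx)

lemma mn_le {p : T} {x : ℕ} (hx : x ∈ comb p) : mn p ≤ x := by
  classical
  have h : comb p ≠ 0 := fun h0 => by simp [h0] at hx
  rw [mn, dif_pos (toFinset_ne h)]
  exact Finset.min'_le _ _ (Multiset.mem_toFinset.2 hx)

lemma mx_congr {p q : T} (h : comb p = comb q) : mx p = mx q := by
  simp only [mx, h]

lemma mn_congr {p q : T} (h : comb p = comb q) : mn p = mn q := by
  simp only [mn, h]

/-- Toggle the overlined status of the part `v`. -/
def tog (v : ℕ) (p : T) : T :=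
  if v ∈ p.1 then (p.1.erase v, v ::ₘ p.2) else (v ::ₘ p.1, p.2.erase v)

lemma comb_tog {v : ℕ} {p : T} (hv : v ∈ comb p) : comb (tog v p) = comb p := by
  classical
  rw [tog]
  split_ifs with h
  · show p.1.erase v + (v ::ₘ p.2) = p.1 + p.2
    rw [← Multiset.singleton_add, ← add_assoc, add_comm (p.1.erase v) {v},
      Multiset.singleton_add, Multiset.cons_erase h]
  · have h2 : v ∈ p.2 := by
      rcases Multiset.mem_add.1 hv with h' | h'
      · exact absurd h' h
      · exact h'
    show (v ::ₘ p.1) + p.2.erase v = p.1 + p.2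
    rw [← Multiset.singleton_add, add_comm {v} p.1, add_assoc,
      Multiset.singleton_add, Multiset.cons_erase h2]

lemma tog_mem_Pset {m v : ℕ} {p : T} (hp : p ∈ Pset m) (hv : v ∈ comb p) :
    tog v p ∈ Pset m := by
  classical
  rw [mem_Pset] at hp ⊢
  obtain ⟨hnd, hodd, hsum⟩ := hp
  refine ⟨?_, by rw [comb_tog hv]; exact hodd, by rw [comb_tog hv]; exact hsum⟩
  rw [tog]
  split_ifs with h
  · exact hnd.erase v
  · exact Multiset.nodup_cons.2 ⟨h, hnd⟩

lemma tog_fst_self {v : ℕ} {p : T} (hnd : p.1.Nodup) :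
    (v ∈ (tog v p).1 ↔ v ∉ p.1) := by
  classical
  rw [tog]
  split_ifs with h
  · simp only [h, not_true_eq_false, iff_false]
    exact hnd.notMem_erase
  · simp [Multiset.mem_cons_self, h]

lemma tog_fst_other {u v : ℕ} {p : T} (huv : u ≠ v) :
    (u ∈ (tog v p).1 ↔ u ∈ p.1) := by
  classical
  rw [tog]
  split_ifs with h
  · exact Multiset.mem_erase_of_ne huv
  · simp [Multiset.mem_cons, huv]

lemma tog_tog {v : ℕ} {p : T} (hnd : p.1.Nodup) (hv : v ∈ comb p) :
    tog v (tog v p) = p := by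
  classical
  by_cases h : v ∈ p.1
  · have h1 : tog v p = (p.1.erase v, v ::ₘ p.2) := by rw [tog, if_pos h]
    have h2 : v ∉ (tog v p).1 := by rw [h1]; exact hnd.notMem_erase
    rw [tog, if_neg h2, h1]
    exact Prod.ext (by simp [Multiset.cons_erase h]) (by simp)
  · have h2 : v ∈ p.2 := by
      rcases Multiset.mem_add.1 hv with h' | h'
      · exact absurd h' h
      · exact h'
    have h1 : tog v p = (v ::ₘ p.1, p.2.erase v) := by rw [tog, if_neg h]
    have h3 : v ∈ (tog v p).1 := by rw [h1]; exact Multiset.mem_cons_self _ _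
    rw [tog, if_pos h3, h1]
    exact Prod.ext (by simp) (by simp [Multiset.cons_erase h2])

end

noncomputable section
open Multiset in
/-- number of odd divisors -/
def dOdd (m : ℕ) : ℕ := (m.divisors.filter (fun i => Odd i)).card

def E0 (m : ℕ) : Set T := {p | p ∈ Pset m ∧ mn p = mx p ∧ mx p ∉ p.1}
def E1 (m : ℕ) : Set T := {p | p ∈ Pset m ∧ mn p = mx p ∧ mx p ∈ p.1}
def C00 (m : ℕ) : Set T := {p | p ∈ Pset m ∧ mn p < mx p ∧ mx p ∉ p.1 ∧ mn p ∉ p.1}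
def C10 (m : ℕ) : Set T := {p | p ∈ Pset m ∧ mn p < mx p ∧ mx p ∈ p.1 ∧ mn p ∉ p.1}
def C01 (m : ℕ) : Set T := {p | p ∈ Pset m ∧ mn p < mx p ∧ mx p ∉ p.1 ∧ mn p ∈ p.1}
def C11 (m : ℕ) : Set T := {p | p ∈ Pset m ∧ mn p < mx p ∧ mx p ∈ p.1 ∧ mn p ∈ p.1}

def bF (m : ℕ) : ℕ := (C00 m).ncard

lemma comb_ne_of_mem {m : ℕ} {p : T} (hm : m ≠ 0) (hp : p ∈ Pset m) : comb p ≠ 0 := by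
  intro h0
  have := (mem_Pset.1 hp).2.2
  rw [h0] at this
  simp at this
  exact hm this.symm

/-- toggling the max part -/
def Fx (p : T) : T := tog (mx p) p
/-- toggling the min part -/
def Fn (p : T) : T := tog (mn p) p

section classes
variable {m : ℕ} (hm : m ≠ 0)

lemma Fx_spec {p : T} (hp : p ∈ Pset m) (hne : comb p ≠ 0) :
    Fx p ∈ Pset m ∧ comb (Fx p) = comb p ∧ mx (Fx p) = mx p ∧ mn (Fx p) = mn p ∧
      (mx p ∈ (Fx p).1 ↔ mx p ∉ p.1) ∧ Fx (Fx p) = p := by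
  have hv : mx p ∈ comb p := mx_mem hne
  have hc : comb (Fx p) = comb p := comb_tog hv
  have hnd : p.1.Nodup := (mem_Pset.1 hp).1
  refine ⟨tog_mem_Pset hp hv, hc, mx_congr hc, mn_congr hc, tog_fst_self hnd, ?_⟩
  show tog (mx (Fx p)) (Fx p) = p
  rw [mx_congr hc]
  exact tog_tog hnd hv

lemma Fn_spec {p : T} (hp : p ∈ Pset m) (hne : comb p ≠ 0) :
    Fn p ∈ Pset m ∧ comb (Fn p) = comb p ∧ mx (Fn p) = mx p ∧ mn (Fn p) = mn p ∧
      (mn p ∈ (Fn p).1 ↔ mn p ∉ p.1) ∧ Fn (Fn p) = p := by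
  have hv : mn p ∈ comb p := mn_mem hne
  have hc : comb (Fn p) = comb p := comb_tog hv
  have hnd : p.1.Nodup := (mem_Pset.1 hp).1
  refine ⟨tog_mem_Pset hp hv, hc, mx_congr hc, mn_congr hc, tog_fst_self hnd, ?_⟩
  show tog (mn (Fn p)) (Fn p) = p
  rw [mn_congr hc]
  exact tog_tog hnd hv

/-- counting via images -/
lemma ncard_eq_of_toggle {A B : Set T} {F : T → T}
    (hAB : ∀ p ∈ A, F p ∈ B ∧ F (F p) = p) (hBA : ∀ p ∈ B, F p ∈ A ∧ F (F p) = p) :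
    B.ncard = A.ncard := by
  have himg : F '' A = B := by
    apply Set.Subset.antisymm
    · rintro q ⟨p, hp, rfl⟩
      exact (hAB p hp).1
    · intro q hq
      exact ⟨F q, (hBA q hq).1, (hBA q hq).2⟩
  rw [← himg]
  apply Set.ncard_image_of_injOn
  intro p hp q hq h
  rw [← (hAB p hp).2, h, (hAB q hq).2]


include hm

lemma Fx_C00 {p : T} (hp : p ∈ C00 m) : Fx p ∈ C10 m ∧ Fx (Fx p) = p := by
  obtain ⟨hP, hlt, hmx, hmn⟩ := hp
  have hne := comb_ne_of_mem hm hP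
  obtain ⟨h1, h2, h3, h4, h5, h6⟩ := Fx_spec hP hne
  refine ⟨⟨h1, by rw [h3, h4]; exact hlt, by rw [h3]; exact h5.2 hmx, ?_⟩, h6⟩
  rw [h4, Fx, tog_fst_other (Nat.ne_of_lt hlt)]
  exact hmn

lemma Fx_C10 {p : T} (hp : p ∈ C10 m) : Fx p ∈ C00 m ∧ Fx (Fx p) = p := by
  obtain ⟨hP, hlt, hmx, hmn⟩ := hp
  have hne := comb_ne_of_mem hm hP
  obtain ⟨h1, h2, h3, h4, h5, h6⟩ := Fx_spec hP hne
  refine ⟨⟨h1, by rw [h3, h4]; exact hlt, by rw [h3]; intro hc; exact (h5.1 hc) hmx, ?_⟩, h6⟩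
  rw [h4, Fx, tog_fst_other (Nat.ne_of_lt hlt)]
  exact hmn

lemma Fx_C01 {p : T} (hp : p ∈ C01 m) : Fx p ∈ C11 m ∧ Fx (Fx p) = p := by
  obtain ⟨hP, hlt, hmx, hmn⟩ := hp
  have hne := comb_ne_of_mem hm hP
  obtain ⟨h1, h2, h3, h4, h5, h6⟩ := Fx_spec hP hne
  refine ⟨⟨h1, by rw [h3, h4]; exact hlt, by rw [h3]; exact h5.2 hmx, ?_⟩, h6⟩
  rw [h4, Fx, tog_fst_other (Nat.ne_of_lt hlt)]
  exact hmn

lemma Fx_C11 {p : T} (hp : p ∈ C11 m) : Fx p ∈ C01 m ∧ Fx (Fx p) = p := by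
  obtain ⟨hP, hlt, hmx, hmn⟩ := hp
  have hne := comb_ne_of_mem hm hP
  obtain ⟨h1, h2, h3, h4, h5, h6⟩ := Fx_spec hP hne
  refine ⟨⟨h1, by rw [h3, h4]; exact hlt, by rw [h3]; intro hc; exact (h5.1 hc) hmx, ?_⟩, h6⟩
  rw [h4, Fx, tog_fst_other (Nat.ne_of_lt hlt)]
  exact hmn

lemma Fn_C00 {p : T} (hp : p ∈ C00 m) : Fn p ∈ C01 m ∧ Fn (Fn p) = p := by
  obtain ⟨hP, hlt, hmx, hmn⟩ := hp
  have hne := comb_ne_of_mem hm hP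
  obtain ⟨h1, h2, h3, h4, h5, h6⟩ := Fn_spec hP hne
  refine ⟨⟨h1, by rw [h3, h4]; exact hlt, ?_, by rw [h4]; exact h5.2 hmn⟩, h6⟩
  rw [h3, Fn, tog_fst_other (Nat.ne_of_lt hlt).symm]
  exact hmx

lemma Fn_C01 {p : T} (hp : p ∈ C01 m) : Fn p ∈ C00 m ∧ Fn (Fn p) = p := by
  obtain ⟨hP, hlt, hmx, hmn⟩ := hp
  have hne := comb_ne_of_mem hm hP
  obtain ⟨h1, h2, h3, h4, h5, h6⟩ := Fn_spec hP hne
  refine ⟨⟨h1, by rw [h3, h4]; exact hlt, ?_, by rw [h4]; intro hc; exact (h5.1 hc) hmn⟩, h6⟩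
  rw [h3, Fn, tog_fst_other (Nat.ne_of_lt hlt).symm]
  exact hmx

lemma ncard_C10 : (C10 m).ncard = bF m :=
  ncard_eq_of_toggle (A := C00 m) (B := C10 m) (F := Fx) (fun p hp => Fx_C00 hm hp) (fun p hp => Fx_C10 hm hp)

lemma ncard_C01 : (C01 m).ncard = bF m :=
  ncard_eq_of_toggle (A := C00 m) (B := C01 m) (F := Fn) (fun p hp => Fn_C00 hm hp) (fun p hp => Fn_C01 hm hp)

lemma ncard_C11 : (C11 m).ncard = bF m := by
  rw [ncard_eq_of_toggle (A := C01 m) (B := C11 m) (F := Fx) (fun p hp => Fx_C01 hm hp) (fun p hp => Fx_C11 hm hp)]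
  exact ncard_C01 hm

end classes
end

noncomputable section
section Ecount
variable {m : ℕ} (hm : m ≠ 0)

lemma comb_all_eq {p : T} (hne : comb p ≠ 0) (heq : mn p = mx p) :
    ∀ x ∈ comb p, x = mx p := fun x hx =>
  le_antisymm (le_mx hx) (heq ▸ mn_le hx)

include hm

lemma mx_pos {p : T} (hp : p ∈ Pset m) : 0 < mx p := by
  have hne := comb_ne_of_mem hm hp
  exact ((mem_Pset.1 hp).2.1 _ (mx_mem hne)).pos

lemma E0_eq : E0 m = (fun i => ((0 : Multiset ℕ), Multiset.replicate (m / i) i)) ''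
    ↑(m.divisors.filter (fun i => Odd i)) := by
  classical
  ext p
  constructor
  · rintro ⟨hP, heq, hnin⟩
    have hne := comb_ne_of_mem hm hP
    obtain ⟨hnd, hodd, hsum⟩ := mem_Pset.1 hP
    set v := mx p with hv
    have hall := comb_all_eq hne heq
    have h1 : p.1 = 0 := by
      rw [Multiset.eq_zero_iff_forall_notMem]
      intro x hx
      have : x = v := hall x (Multiset.mem_add.2 (Or.inl hx))
      exact hnin (this ▸ hx)
    have h2 : p.2 = Multiset.replicate (Multiset.card p.2) v := by
      rw [Multiset.eq_replicate_card]
      intro x hx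
      exact hall x (Multiset.mem_add.2 (Or.inr hx))
    have hcv : comb p = Multiset.replicate (Multiset.card p.2) v := by
      rw [comb, h1, zero_add, ← h2]
    have hsum' : Multiset.card p.2 * v = m := by
      rw [← hsum, hcv, Multiset.sum_replicate, smul_eq_mul]
    have hvpos : 0 < v := mx_pos hm hP
    have hdvd : v ∣ m := ⟨Multiset.card p.2, by rw [← hsum', mul_comm]⟩
    refine ⟨v, ?_, ?_⟩
    · rw [Finset.mem_coe, Finset.mem_filter, Nat.mem_divisors]
      exact ⟨⟨hdvd, hm⟩, hodd _ (mx_mem hne)⟩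
    · have hq : m / v = Multiset.card p.2 := by
        rw [← hsum', Nat.mul_div_cancel _ hvpos]
      show ((0 : Multiset ℕ), Multiset.replicate (m / v) v) = p
      rw [hq]
      exact Prod.ext h1.symm h2.symm
  · rintro ⟨i, hi, rfl⟩
    rw [Finset.mem_coe, Finset.mem_filter, Nat.mem_divisors] at hi
    obtain ⟨⟨hdvd, -⟩, hoddi⟩ := hi
    have hipos : 0 < i := hoddi.pos
    have hkpos : 0 < m / i := Nat.div_pos (Nat.le_of_dvd (Nat.pos_of_ne_zero hm) hdvd) hipos
    set p : T := ((0 : Multiset ℕ), Multiset.replicate (m / i) i) with hp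
    have hcomb : comb p = Multiset.replicate (m / i) i := by
      rw [comb, hp, zero_add]
    have hmem : ∀ x ∈ comb p, x = i := by
      intro x hx
      rw [hcomb] at hx
      exact (Multiset.eq_of_mem_replicate hx)
    have hP : p ∈ Pset m := by
      rw [mem_Pset]
      refine ⟨Multiset.nodup_zero, fun x hx => (hmem x hx) ▸ hoddi, ?_⟩
      rw [hcomb, Multiset.sum_replicate, smul_eq_mul, Nat.div_mul_cancel hdvd]
    have hne : comb p ≠ 0 := by
      rw [hcomb]
      intro h0
      have hcc := congrArg Multiset.card h0
      simp at hcc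
      have := Nat.le_of_dvd (Nat.pos_of_ne_zero hm) hdvd
      omega
    have hmx : mx p = i := hmem _ (mx_mem hne)
    have hmn : mn p = i := hmem _ (mn_mem hne)
    exact ⟨hP, by rw [hmx, hmn], by rw [hmx]; exact Multiset.notMem_zero i⟩

lemma E1_eq : E1 m = (fun i => (({i} : Multiset ℕ), Multiset.replicate (m / i - 1) i)) ''
    ↑(m.divisors.filter (fun i => Odd i)) := by
  classical
  ext p
  constructor
  · rintro ⟨hP, heq, hin⟩
    have hne := comb_ne_of_mem hm hP
    obtain ⟨hnd, hodd, hsum⟩ := mem_Pset.1 hP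
    set v := mx p with hv
    have hall := comb_all_eq hne heq
    have h1 : p.1 = {v} := by
      have hsub : ∀ x ∈ p.1, x = v := fun x hx => hall x (Multiset.mem_add.2 (Or.inl hx))
      have hrep : p.1 = Multiset.replicate (Multiset.card p.1) v :=
        Multiset.eq_replicate_card.2 hsub
      have hc1 : Multiset.card p.1 ≤ 1 := by
        have hcnt := (Multiset.nodup_iff_count_le_one.1 hnd) v
        rw [hrep, Multiset.count_replicate_self] at hcnt
        exact hcnt
      have hc2 : 1 ≤ Multiset.card p.1 := by
        rw [Nat.one_le_iff_ne_zero]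
        intro h0
        rw [Multiset.card_eq_zero.1 h0] at hin
        exact Multiset.notMem_zero _ hin
      have : Multiset.card p.1 = 1 := le_antisymm hc1 hc2
      rw [hrep, this, Multiset.replicate_one]
    have h2 : p.2 = Multiset.replicate (Multiset.card p.2) v :=
      Multiset.eq_replicate_card.2 fun x hx => hall x (Multiset.mem_add.2 (Or.inr hx))
    have hcv : comb p = Multiset.replicate (Multiset.card p.2 + 1) v := by
      rw [comb, h1]
      conv_lhs => rw [h2]
      rw [Multiset.singleton_add, ← Multiset.replicate_succ]
    have hsum' : (Multiset.card p.2 + 1) * v = m := by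
      rw [← hsum, hcv, Multiset.sum_replicate, smul_eq_mul]
    have hvpos : 0 < v := mx_pos hm hP
    have hdvd : v ∣ m := ⟨Multiset.card p.2 + 1, by rw [← hsum', mul_comm]⟩
    refine ⟨v, ?_, ?_⟩
    · rw [Finset.mem_coe, Finset.mem_filter, Nat.mem_divisors]
      exact ⟨⟨hdvd, hm⟩, hodd _ (mx_mem hne)⟩
    · have hq : m / v = Multiset.card p.2 + 1 := by
        rw [← hsum', Nat.mul_div_cancel _ hvpos]
      show (({v} : Multiset ℕ), Multiset.replicate (m / v - 1) v) = p
      rw [hq]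
      simp only [Nat.add_sub_cancel]
      exact Prod.ext h1.symm h2.symm
  · rintro ⟨i, hi, rfl⟩
    rw [Finset.mem_coe, Finset.mem_filter, Nat.mem_divisors] at hi
    obtain ⟨⟨hdvd, -⟩, hoddi⟩ := hi
    have hipos : 0 < i := hoddi.pos
    have hkpos : 0 < m / i := Nat.div_pos (Nat.le_of_dvd (Nat.pos_of_ne_zero hm) hdvd) hipos
    set p : T := (({i} : Multiset ℕ), Multiset.replicate (m / i - 1) i) with hp
    have hcomb : comb p = Multiset.replicate (m / i) i := by
      rw [comb, hp]
      show {i} + Multiset.replicate (m / i - 1) i = _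
      rw [Multiset.singleton_add, ← Multiset.replicate_succ, Nat.sub_add_cancel hkpos]
    have hmem : ∀ x ∈ comb p, x = i := by
      intro x hx
      rw [hcomb] at hx
      exact Multiset.eq_of_mem_replicate hx
    have hP : p ∈ Pset m := by
      rw [mem_Pset]
      refine ⟨Multiset.nodup_singleton i, fun x hx => (hmem x hx) ▸ hoddi, ?_⟩
      rw [hcomb, Multiset.sum_replicate, smul_eq_mul, Nat.div_mul_cancel hdvd]
    have hne : comb p ≠ 0 := by
      rw [hcomb]
      intro h0
      have hcc := congrArg Multiset.card h0
      simp at hcc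
      have := Nat.le_of_dvd (Nat.pos_of_ne_zero hm) hdvd
      omega
    have hmx : mx p = i := hmem _ (mx_mem hne)
    have hmn : mn p = i := hmem _ (mn_mem hne)
    exact ⟨hP, by rw [hmx, hmn], by rw [hmx]; exact Multiset.mem_singleton_self i⟩
end Ecount
end

noncomputable section
def cF (m : ℕ) : ℕ := (Pset m).ncard

section structure_lemma
variable {m : ℕ}

lemma ncard_E0 (hm : m ≠ 0) : (E0 m).ncard = dOdd m := by
  classical
  rw [E0_eq hm]
  rw [Set.ncard_image_of_injOn, Set.ncard_coe_finset]
  · rfl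
  · intro i hi j hj hij
    rw [Finset.mem_coe, Finset.mem_filter, Nat.mem_divisors] at hi hj
    have hkpos : 0 < m / i :=
      Nat.div_pos (Nat.le_of_dvd (Nat.pos_of_ne_zero hm) hi.1.1) hi.2.pos
    have h2 := congrArg Prod.snd hij
    simp only at h2
    have : i ∈ Multiset.replicate (m / j) j := by
      rw [← h2]
      exact Multiset.mem_replicate.2 ⟨Nat.pos_iff_ne_zero.1 hkpos, rfl⟩
    exact (Multiset.mem_replicate.1 this).2

lemma ncard_E1 (hm : m ≠ 0) : (E1 m).ncard = dOdd m := by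
  classical
  rw [E1_eq hm]
  rw [Set.ncard_image_of_injOn, Set.ncard_coe_finset]
  · rfl
  · intro i hi j hj hij
    have h1 := congrArg Prod.fst hij
    simp only at h1
    have : i ∈ ({j} : Multiset ℕ) := h1 ▸ Multiset.mem_singleton_self i
    exact Multiset.mem_singleton.1 this

lemma Pset_partition (hm : m ≠ 0) :
    Pset m = E0 m ∪ E1 m ∪ C00 m ∪ C01 m ∪ C10 m ∪ C11 m := by
  ext p
  simp only [Set.mem_union, E0, E1, C00, C01, C10, C11, Set.mem_setOf_eq]
  constructor
  · intro hp
    have hne := comb_ne_of_mem hm hp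
    have hle : mn p ≤ mx p := mn_le (mx_mem hne)
    rcases eq_or_lt_of_le hle with heq | hlt
    · by_cases h1 : mx p ∈ p.1
      · exact Or.inl (Or.inl (Or.inl (Or.inl (Or.inr ⟨hp, heq, h1⟩))))
      · exact Or.inl (Or.inl (Or.inl (Or.inl (Or.inl ⟨hp, heq, h1⟩))))
    · by_cases h1 : mx p ∈ p.1 <;> by_cases h2 : mn p ∈ p.1
      · exact Or.inr ⟨hp, hlt, h1, h2⟩
      · exact Or.inl (Or.inr ⟨hp, hlt, h1, h2⟩)
      · exact Or.inl (Or.inl (Or.inr ⟨hp, hlt, h1, h2⟩))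
      · exact Or.inl (Or.inl (Or.inl (Or.inr ⟨hp, hlt, h1, h2⟩)))
  · rintro (((((⟨h, -⟩ | ⟨h, -⟩) | ⟨h, -⟩) | ⟨h, -⟩) | ⟨h, -⟩) | ⟨h, -⟩) <;> exact h

lemma cF_structure (hm : m ≠ 0) : cF m = 2 * dOdd m + 4 * bF m := by
  classical
  have hfin : ∀ s : Set T, s ⊆ Pset m → s.Finite := fun s hs => (Pset_finite m).subset hs
  have sE0 : E0 m ⊆ Pset m := fun p hp => hp.1
  have sE1 : E1 m ⊆ Pset m := fun p hp => hp.1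
  have sC00 : C00 m ⊆ Pset m := fun p hp => hp.1
  have sC01 : C01 m ⊆ Pset m := fun p hp => hp.1
  have sC10 : C10 m ⊆ Pset m := fun p hp => hp.1
  have sC11 : C11 m ⊆ Pset m := fun p hp => hp.1
  have dEC : ∀ A B : Set T, (∀ p ∈ A, mn p = mx p) → (∀ p ∈ B, mn p < mx p) →
      Disjoint A B := by
    intro A B hA hB
    rw [Set.disjoint_left]
    intro p hp hp'
    exact absurd (hA p hp) (ne_of_lt (hB p hp'))
  have hE0eq : ∀ p ∈ E0 m, mn p = mx p := fun p hp => hp.2.1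
  have hE1eq : ∀ p ∈ E1 m, mn p = mx p := fun p hp => hp.2.1
  have hC00lt : ∀ p ∈ C00 m, mn p < mx p := fun p hp => hp.2.1
  have hC01lt : ∀ p ∈ C01 m, mn p < mx p := fun p hp => hp.2.1
  have hC10lt : ∀ p ∈ C10 m, mn p < mx p := fun p hp => hp.2.1
  have hC11lt : ∀ p ∈ C11 m, mn p < mx p := fun p hp => hp.2.1
  have d1 : Disjoint (E0 m) (E1 m) :=
    Set.disjoint_left.2 fun p hp hq => hp.2.2 hq.2.2
  have d2 : Disjoint (E0 m ∪ E1 m) (C00 m) :=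
    Set.disjoint_union_left.2 ⟨dEC _ _ hE0eq hC00lt, dEC _ _ hE1eq hC00lt⟩
  have d3 : Disjoint (E0 m ∪ E1 m ∪ C00 m) (C01 m) :=
    Set.disjoint_union_left.2 ⟨Set.disjoint_union_left.2
      ⟨dEC _ _ hE0eq hC01lt, dEC _ _ hE1eq hC01lt⟩,
      Set.disjoint_left.2 fun p hp hq => hp.2.2.2 hq.2.2.2⟩
  have d4 : Disjoint (E0 m ∪ E1 m ∪ C00 m ∪ C01 m) (C10 m) :=
    Set.disjoint_union_left.2 ⟨Set.disjoint_union_left.2 ⟨Set.disjoint_union_left.2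
      ⟨dEC _ _ hE0eq hC10lt, dEC _ _ hE1eq hC10lt⟩,
      Set.disjoint_left.2 fun p hp hq => hp.2.2.1 hq.2.2.1⟩,
      Set.disjoint_left.2 fun p hp hq => hp.2.2.1 hq.2.2.1⟩
  have d5 : Disjoint (E0 m ∪ E1 m ∪ C00 m ∪ C01 m ∪ C10 m) (C11 m) :=
    Set.disjoint_union_left.2 ⟨Set.disjoint_union_left.2 ⟨Set.disjoint_union_left.2
      ⟨Set.disjoint_union_left.2 ⟨dEC _ _ hE0eq hC11lt, dEC _ _ hE1eq hC11lt⟩,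
      Set.disjoint_left.2 fun p hp hq => hp.2.2.1 hq.2.2.1⟩,
      Set.disjoint_left.2 fun p hp hq => hp.2.2.1 hq.2.2.1⟩,
      Set.disjoint_left.2 fun p hp hq => hp.2.2.2 hq.2.2.2⟩
  have e1 : cF m = (E0 m ∪ E1 m ∪ C00 m ∪ C01 m ∪ C10 m).ncard + (C11 m).ncard := by
    rw [cF, Pset_partition hm]
    exact Set.ncard_union_eq d5
      (hfin _ (by intro p hp
                  rcases hp with ((((h|h)|h)|h)|h) <;> exact h.1)) (hfin _ sC11)
  have e2 : (E0 m ∪ E1 m ∪ C00 m ∪ C01 m ∪ C10 m).ncard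
      = (E0 m ∪ E1 m ∪ C00 m ∪ C01 m).ncard + (C10 m).ncard :=
    Set.ncard_union_eq d4
      (hfin _ (by intro p hp
                  rcases hp with (((h|h)|h)|h) <;> exact h.1)) (hfin _ sC10)
  have e3 : (E0 m ∪ E1 m ∪ C00 m ∪ C01 m).ncard
      = (E0 m ∪ E1 m ∪ C00 m).ncard + (C01 m).ncard :=
    Set.ncard_union_eq d3
      (hfin _ (by intro p hp
                  rcases hp with ((h|h)|h) <;> exact h.1)) (hfin _ sC01)
  have e4 : (E0 m ∪ E1 m ∪ C00 m).ncard = (E0 m ∪ E1 m).ncard + (C00 m).ncard :=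
    Set.ncard_union_eq d2
      (hfin _ (by intro p hp
                  rcases hp with (h|h) <;> exact h.1)) (hfin _ sC00)
  have e5 : (E0 m ∪ E1 m).ncard = (E0 m).ncard + (E1 m).ncard :=
    Set.ncard_union_eq d1 (hfin _ sE0) (hfin _ sE1)
  rw [e1, e2, e3, e4, e5, ncard_E0 hm, ncard_E1 hm, ncard_C10 hm, ncard_C01 hm,
    ncard_C11 hm]
  show _ + bF m + _ + _ + _ = _
  ring

end structure_lemma

lemma cF_zero : cF 0 = 1 := by
  have : Pset 0 = {((0 : Multiset ℕ), (0 : Multiset ℕ))} := by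
    ext p
    constructor
    · intro hp
      obtain ⟨-, hodd, hsum⟩ := mem_Pset.1 hp
      have hc : comb p = 0 := by
        rw [Multiset.eq_zero_iff_forall_notMem]
        intro x hx
        have := (hodd x hx).pos
        have hle := mem_le_sum hx
        omega
      have h1 : p.1 = 0 := Multiset.le_zero.1 (le_trans (Multiset.le_add_right _ _) hc.le)
      have h2 : p.2 = 0 := Multiset.le_zero.1 (le_trans (Multiset.le_add_left _ _) hc.le)
      simp [Set.mem_singleton_iff, Prod.ext_iff, h1, h2]
    · rintro rfl
      exact mem_Pset.2 ⟨Multiset.nodup_zero, by simp [comb], by simp [comb]⟩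
  rw [cF, this, Set.ncard_singleton]
end

noncomputable section

def OPTset (k n : ℕ) : Set (Fin k → T) :=
  {f | (∀ i, IsOddOverpartition (f i)) ∧ (∑ i, ((f i).1.sum + (f i).2.sum)) = n}

lemma OPT_eq_ncard (k n : ℕ) : OPT k n = (OPTset k n).ncard := rfl

/-- the piece of `OPTset (k+1) (a+b)` where the head sums to `a`. -/
def Piece (k a b : ℕ) : Set (Fin (k + 1) → T) :=
  {f | f ∈ OPTset (k + 1) (a + b) ∧ (f 0).1.sum + (f 0).2.sum = a}

def pieceEquiv (k a b : ℕ) : ↥(Piece k a b) ≃ ↥(Pset a) × ↥(OPTset k b) where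
  toFun f :=
    ⟨⟨f.1 0, f.2.1.1 0, f.2.2⟩,
     ⟨Fin.tail f.1, fun i => f.2.1.1 i.succ, by
        have hs := f.2.1.2
        rw [Fin.sum_univ_succ, f.2.2] at hs
        exact Nat.add_left_cancel hs⟩⟩
  invFun x :=
    ⟨Fin.cons x.1.1 x.2.1, ⟨⟨fun i => by
        refine Fin.cases ?_ ?_ i
        · rw [Fin.cons_zero]; exact x.1.2.1
        · intro j; rw [Fin.cons_succ]; exact x.2.2.1 j, by
        rw [Fin.sum_univ_succ]
        simp only [Fin.cons_zero, Fin.cons_succ]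
        rw [x.1.2.2, x.2.2.2]⟩, by rw [Fin.cons_zero]; exact x.1.2.2⟩⟩
  left_inv f := Subtype.ext (Fin.cons_self_tail f.1)
  right_inv x := by
    obtain ⟨⟨p, hp⟩, ⟨g, hg⟩⟩ := x
    refine Prod.ext (Subtype.ext ?_) (Subtype.ext ?_) <;>
      simp [Fin.cons_zero, Fin.tail_cons]

lemma OPTset_zero_finite (n : ℕ) : (OPTset 0 n).Finite :=
  Set.Finite.subset (Set.finite_univ (α := Fin 0 → T)) (Set.subset_univ _)

lemma Piece_finite {k a b : ℕ} (hk : (OPTset k b).Finite) : (Piece k a b).Finite := by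
  have : Finite ↥(Pset a) := (Pset_finite a).to_subtype
  have : Finite ↥(OPTset k b) := hk.to_subtype
  have : Finite ↥(Piece k a b) := Finite.of_equiv _ (pieceEquiv k a b).symm
  exact Set.toFinite _

lemma OPTset_succ_eq (k n : ℕ) :
    OPTset (k + 1) n = ⋃ x ∈ Finset.HasAntidiagonal.antidiagonal n, Piece k x.1 x.2 := by
  ext f
  simp only [Set.mem_iUnion]
  constructor
  · intro hf
    have hle : (f 0).1.sum + (f 0).2.sum ≤ n := by
      rw [← hf.2, Fin.sum_univ_succ]
      exact Nat.le_add_right _ _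
    refine ⟨((f 0).1.sum + (f 0).2.sum, n - ((f 0).1.sum + (f 0).2.sum)),
      Finset.HasAntidiagonal.mem_antidiagonal.2 (Nat.add_sub_cancel' hle), ?_, rfl⟩
    show f ∈ OPTset (k+1) (_ + _)
    rw [Nat.add_sub_cancel' hle]
    exact hf
  · rintro ⟨x, hx, hf, -⟩
    rw [← Finset.HasAntidiagonal.mem_antidiagonal.1 hx]
    exact hf

lemma OPTset_finite (k n : ℕ) : (OPTset k n).Finite := by
  induction k generalizing n with
  | zero => exact OPTset_zero_finite n
  | succ k ih =>
    rw [OPTset_succ_eq]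
    exact Set.Finite.biUnion (Finset.finite_toSet _) fun x _ => Piece_finite (ih x.2)

lemma Piece_ncard (k a b : ℕ) : (Piece k a b).ncard = cF a * OPT k b := by
  have h1 : (Piece k a b).ncard = Nat.card ↥(Piece k a b) := rfl
  rw [h1, Nat.card_congr (pieceEquiv k a b), Nat.card_prod]
  rfl

lemma ncard_biUnion {ι α : Type*} (s : Finset ι) (t : ι → Set α)
    (hfin : ∀ x ∈ s, (t x).Finite)
    (hdisj : ∀ x ∈ s, ∀ y ∈ s, x ≠ y → Disjoint (t x) (t y)) :
    (⋃ x ∈ s, t x).ncard = ∑ x ∈ s, (t x).ncard := by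
  classical
  induction s using Finset.induction_on with
  | empty => simp
  | @insert a s ha ih =>
    rw [Finset.set_biUnion_insert, Finset.sum_insert ha]
    have hd : Disjoint (t a) (⋃ x ∈ s, t x) := by
      rw [Set.disjoint_iUnion_right]
      intro x
      rw [Set.disjoint_iUnion_right]
      intro hx
      exact hdisj a (Finset.mem_insert_self a s) x (Finset.mem_insert_of_mem hx)
        (fun h => ha (h ▸ hx))
    rw [Set.ncard_union_eq hd (hfin a (Finset.mem_insert_self a s))
      (Set.Finite.biUnion (Finset.finite_toSet s)
        (fun x hx => hfin x (Finset.mem_insert_of_mem hx)))]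
    rw [ih (fun x hx => hfin x (Finset.mem_insert_of_mem hx))
      (fun x hx y hy => hdisj x (Finset.mem_insert_of_mem hx) y (Finset.mem_insert_of_mem hy))]

lemma OPT_succ (k n : ℕ) :
    OPT (k + 1) n = ∑ x ∈ Finset.HasAntidiagonal.antidiagonal n, cF x.1 * OPT k x.2 := by
  classical
  rw [OPT_eq_ncard, OPTset_succ_eq]
  rw [ncard_biUnion _ _ (fun x _ => Piece_finite (OPTset_finite k x.2)) ?_]
  · exact Finset.sum_congr rfl fun x _ => Piece_ncard k x.1 x.2
  · intro x hx y hy hxy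
    rw [Set.disjoint_left]
    intro f hfx hfy
    apply hxy
    have h1 : x.1 = y.1 := by rw [← hfx.2, ← hfy.2]
    have hx' := Finset.HasAntidiagonal.mem_antidiagonal.1 hx
    have hy' := Finset.HasAntidiagonal.mem_antidiagonal.1 hy
    have : x.2 = y.2 := by omega
    exact Prod.ext h1 this

lemma OPT_zero (n : ℕ) : OPT 0 n = if n = 0 then 1 else 0 := by
  rw [OPT_eq_ncard]
  rcases eq_or_ne n 0 with rfl | hn
  · rw [if_pos rfl]
    have : OPTset 0 0 = Set.univ := by
      ext f
      simp only [OPTset, Set.mem_setOf_eq, Set.mem_univ, iff_true]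
      exact ⟨fun i => absurd i.2 (Nat.not_lt_zero _), by simp⟩
    rw [this, Set.ncard_univ, Nat.card_unique]
  · rw [if_neg hn]
    have : OPTset 0 n = ∅ := by
      ext f
      simp only [OPTset, Set.mem_setOf_eq, Set.mem_empty_iff_false, iff_false]
      rintro ⟨-, h⟩
      simp only [Finset.univ_eq_empty, Finset.sum_empty] at h
      exact hn h.symm
    rw [this, Set.ncard_empty]
end

noncomputable section
open PowerSeries

def Us : PowerSeries (ZMod 16) := PowerSeries.mk fun m => (cF m : ZMod 16)
def Ds : PowerSeries (ZMod 16) := PowerSeries.mk fun m => (dOdd m : ZMod 16)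
def Bs : PowerSeries (ZMod 16) :=
  PowerSeries.mk fun m => if m = 0 then 0 else (bF m : ZMod 16)

lemma dOdd_zero : dOdd 0 = 0 := by
  simp [dOdd]

lemma coeff_OPT (k n : ℕ) : (OPT k n : ZMod 16) = PowerSeries.coeff n (Us ^ k) := by
  induction k generalizing n with
  | zero =>
    rw [pow_zero, PowerSeries.coeff_one, OPT_zero]
    split <;> simp
  | succ k ih =>
    rw [pow_succ', PowerSeries.coeff_mul, OPT_succ]
    push_cast
    refine Finset.sum_congr rfl fun x _ => ?_
    rw [ih x.2]
    have hc : (PowerSeries.coeff x.1) Us = (cF x.1 : ZMod 16) :=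
      PowerSeries.coeff_mk _ _
    rw [hc]

lemma hC2 : (2 : PowerSeries (ZMod 16)) = PowerSeries.C 2 :=
  (map_ofNat (PowerSeries.C : ZMod 16 →+* PowerSeries (ZMod 16)) 2).symm
lemma hC4 : (4 : PowerSeries (ZMod 16)) = PowerSeries.C 4 :=
  (map_ofNat (PowerSeries.C : ZMod 16 →+* PowerSeries (ZMod 16)) 4).symm
lemma hC8 : (8 : PowerSeries (ZMod 16)) = PowerSeries.C 8 :=
  (map_ofNat (PowerSeries.C : ZMod 16 →+* PowerSeries (ZMod 16)) 8).symm

lemma h16 : (16 : PowerSeries (ZMod 16)) = 0 := by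
  rw [← map_ofNat (PowerSeries.C : ZMod 16 →+* PowerSeries (ZMod 16)) 16]
  rw [show ((16 : ZMod 16) = 0) by decide, map_zero]

lemma Us_eq : Us = 1 + 2 * Ds + 4 * Bs := by
  ext n
  rw [hC2, hC4]
  rw [map_add, map_add, PowerSeries.coeff_one, PowerSeries.coeff_C_mul,
    PowerSeries.coeff_C_mul, Us, Ds, Bs, PowerSeries.coeff_mk, PowerSeries.coeff_mk,
    PowerSeries.coeff_mk]
  rcases eq_or_ne n 0 with rfl | hn
  · rw [if_pos rfl, if_pos rfl, cF_zero, dOdd_zero]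
    norm_num
  · rw [if_neg hn, if_neg hn, cF_structure hn]
    push_cast
    ring

lemma Us_four : Us ^ 4 = 1 + 8 * Ds + 8 * Ds ^ 2 := by
  have e1 : Us ^ 2 = 1 + 4 * Ds + 8 * Bs + 4 * Ds ^ 2
      + 16 * (Ds * Bs + Bs ^ 2) := by
    rw [Us_eq]; ring
  rw [h16, zero_mul, add_zero] at e1
  have e2 : Us ^ 4 = (Us ^ 2) ^ 2 := by ring
  have e3 : (1 + 4 * Ds + 8 * Bs + 4 * Ds ^ 2 : PowerSeries (ZMod 16)) ^ 2
      = 1 + 8 * Ds + 8 * Ds ^ 2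
        + 16 * (Ds ^ 2 + 4 * Bs ^ 2 + Ds ^ 4 + Bs + 4 * Ds * Bs + 2 * Ds ^ 3
          + 4 * Bs * Ds ^ 2) := by
    ring
  rw [e2, e1, e3, h16, zero_mul, add_zero]

lemma dOdd_two_mul {M : ℕ} (hM : M ≠ 0) : dOdd (2 * M) = dOdd M := by
  unfold dOdd
  congr 1
  ext i
  simp only [Finset.mem_filter, Nat.mem_divisors]
  constructor
  · rintro ⟨⟨hdvd, -⟩, hodd⟩
    refine ⟨⟨?_, hM⟩, hodd⟩
    have h2 : ¬ (2 ∣ i) := by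
      have := Nat.odd_iff.1 hodd
      omega
    have hcop : Nat.Coprime i 2 :=
      Nat.Coprime.symm ((Nat.Prime.coprime_iff_not_dvd Nat.prime_two).2 h2)
    exact Nat.Coprime.dvd_of_dvd_mul_left hcop hdvd
  · rintro ⟨⟨hdvd, -⟩, hodd⟩
    exact ⟨⟨Dvd.dvd.mul_left hdvd 2, by positivity⟩, hodd⟩

lemma parity (N : ℕ) (hN : N % 4 = 2) :
    2 ∣ dOdd N + ∑ x ∈ Finset.HasAntidiagonal.antidiagonal N, dOdd x.1 * dOdd x.2 := by
  classical
  set M := N / 2 with hM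
  have hNM : N = 2 * M := by omega
  have hMne : M ≠ 0 := by omega
  rw [← ZMod.natCast_eq_zero_iff]
  push_cast
  have hmem : (M, M) ∈ Finset.HasAntidiagonal.antidiagonal N := Finset.HasAntidiagonal.mem_antidiagonal.2 (by omega)
  rw [Finset.sum_eq_sum_sdiff_singleton_add hmem]
  have hzero : ∑ x ∈ Finset.HasAntidiagonal.antidiagonal N \ {(M, M)},
      ((dOdd x.1 : ZMod 2) * (dOdd x.2 : ZMod 2)) = 0 := by
    apply Finset.sum_involution (g := fun x _ => (x.2, x.1))
    · intro a ha
      rw [mul_comm]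
      exact CharTwo.add_self_eq_zero _
    · intro a ha _
      rw [Finset.mem_sdiff, Finset.HasAntidiagonal.mem_antidiagonal] at ha
      intro hc
      apply ha.2
      rw [Finset.mem_singleton]
      have h1 : a.2 = a.1 := congrArg Prod.fst hc
      have : a.1 = M := by omega
      have h2 : a.2 = M := by omega
      exact Prod.ext this h2
    · intro a ha
      rw [Finset.mem_sdiff, Finset.HasAntidiagonal.mem_antidiagonal] at ha ⊢
      refine ⟨by omega, ?_⟩
      rw [Finset.mem_singleton] at ha ⊢
      intro hc
      apply ha.2
      have h1 : a.1 = M := congrArg Prod.snd hc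
      have h2 : a.2 = M := congrArg Prod.fst hc
      exact Prod.ext h1 h2
    · intro a ha
      rfl
  rw [hzero, zero_add, hNM, dOdd_two_mul hMne]
  have : ∀ x : ZMod 2, x + x * x = 0 := by decide
  exact this _

/-- The main divisibility: `16 ∣ OPT 4 N` whenever `N ≡ 2 (mod 4)`. -/
lemma main_dvd (N : ℕ) (hN : N % 4 = 2) : OPT 4 N ≡ 0 [MOD 16] := by
  classical
  rw [Nat.modEq_zero_iff_dvd, ← ZMod.natCast_eq_zero_iff]
  rw [coeff_OPT, Us_four]
  have hNne : N ≠ 0 := by omega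
  rw [map_add, map_add, PowerSeries.coeff_one, if_neg hNne, hC8,
    PowerSeries.coeff_C_mul, PowerSeries.coeff_C_mul, zero_add]
  rw [pow_two, PowerSeries.coeff_mul]
  simp only [Ds, PowerSeries.coeff_mk]
  obtain ⟨j, hj⟩ := parity N hN
  have hcast : (dOdd N : ZMod 16) + ∑ x ∈ Finset.HasAntidiagonal.antidiagonal N,
      (dOdd x.1 : ZMod 16) * (dOdd x.2 : ZMod 16)
      = ((dOdd N + ∑ x ∈ Finset.HasAntidiagonal.antidiagonal N, dOdd x.1 * dOdd x.2 : ℕ) : ZMod 16) := by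
    push_cast
    ring
  have : (8 : ZMod 16) * (dOdd N : ZMod 16)
      + (8 : ZMod 16) * ∑ x ∈ Finset.HasAntidiagonal.antidiagonal N,
        (dOdd x.1 : ZMod 16) * (dOdd x.2 : ZMod 16)
      = 8 * ((dOdd N + ∑ x ∈ Finset.HasAntidiagonal.antidiagonal N, dOdd x.1 * dOdd x.2 : ℕ) : ZMod 16) := by
    rw [← hcast]
    ring
  rw [this, hj]
  push_cast
  rw [show ((2 : ZMod 16) * (j : ZMod 16)) = 2 * j from rfl]
  rw [← mul_assoc]
  rw [show ((8 : ZMod 16) * 2 = 0) by decide, zero_mul]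
end
end OPTAux

/-- For a prime `p ≥ 3`, all `n, α, δ ≥ 0` and `t ∈ {1, …, p-1}`,
`OPT_4(8·3^{2α}·p^{2δ+1}(pn+t) + 2·3^{2α}·p^{2(δ+1)} + 3^{2α} − 1) ≡ 0 (mod 16)`. -/
theorem opt_quadruple_inf_family_mod_sixteen (p : ℕ) (hp : p.Prime) (hp3 : 3 ≤ p)
    (n α δ t : ℕ) (ht1 : 1 ≤ t) (ht2 : t ≤ p - 1) :
    OPT 4 (8 * 3 ^ (2 * α) * p ^ (2 * δ + 1) * (p * n + t)
        + 2 * 3 ^ (2 * α) * p ^ (2 * (δ + 1)) + 3 ^ (2 * α) - 1)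
      ≡ 0 [MOD 16] := by
  have hpodd : p % 2 = 1 := Nat.odd_iff.1 (hp.odd_of_ne_two (by omega))
  set c := 3 ^ (2 * α) with hcdef
  set q1 := p ^ (2 * δ + 1) with hq1def
  set q2 := p ^ (2 * (δ + 1)) with hq2def
  set w := p * n + t with hwdef
  apply OPTAux.main_dvd
  have h1 : 8 * c * q1 * w = 4 * (2 * c * q1 * w) := by ring
  have h2 : 2 * c * q2 = 2 * (c * q2) := by ring
  rw [h1, h2]
  have hc4 : c % 4 = 1 := by
    rw [hcdef, pow_mul, Nat.pow_mod]
    norm_num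
  have hcpos : 0 < c := by
    rw [hcdef]
    positivity
  have hc2 : c % 2 = 1 := by
    rw [hcdef, Nat.pow_mod]
    norm_num
  have hq2mod : q2 % 2 = 1 := by
    rw [hq2def, Nat.pow_mod, hpodd]
    norm_num
  have hy : (c * q2) % 2 = 1 := by
    rw [Nat.mul_mod, hc2, hq2mod]
  omega
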